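/- arXiv:2509.02996 — 2 statements merged into one kernel-verified Lean document; each statement's English description precedes it below -/
import Mathlib

section
/- Let π be a G-invariant full-support probability on a finite set X, P a π-stationary stochastic matrix, and ν any probability measure on G × G. Then γ((P_la)_ra) ≥ γ(P_da(G,ν)), i.e., the independent-double-average QPQ (Q = (1/|G|)Σ_g U_g) has multiplicative spectral gap at least as large as that of any general double-average. -/
open Matrix

/-- The permutation matrix of the action of `g`: `(U_g f)(x) = f(g • x)`. -/
noncomputable def permMat {X G : Type*} [Fintype X] [DecidableEq X] [Group G] [MulAction G X]
    (g : G) : Matrix X X ℝ :=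
  fun x y => if y = g • x then 1 else 0

/-- The double-average `P_da = Σ_{(g,h)} ν(g,h) U_g P U_h`. -/
noncomputable def doubleAvg {X G : Type*} [Fintype X] [DecidableEq X] [Fintype G] [Group G]
    [MulAction G X] (ν : G × G → ℝ) (P : Matrix X X ℝ) : Matrix X X ℝ :=
  ∑ p : G × G, ν p • (permMat p.1 * P * permMat p.2)

/-- The uniform group average `Q = (1/|G|) Σ_{g∈G} U_g`. -/
noncomputable def unifAvg (X G : Type*) [Fintype X] [DecidableEq X] [Fintype G] [Group G]
    [MulAction G X] : Matrix X X ℝ :=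
  (Fintype.card G : ℝ)⁻¹ • ∑ g : G, permMat g

/-- The `L²(π)` norm of a function. -/
noncomputable def pNorm {X : Type*} [Fintype X] (π f : X → ℝ) : ℝ :=
  Real.sqrt (∑ x, π x * f x ^ 2)

/-- Operator norm of `K` restricted to `L²₀(π)`. -/
noncomputable def opNorm20 {X : Type*} [Fintype X] (π : X → ℝ) (K : Matrix X X ℝ) : ℝ :=
  ⨆ f : {f : X → ℝ // (∑ x, π x * f x = 0) ∧ pNorm π f ≤ 1}, pNorm π (K.mulVec f.1)

/-! Since `U_g Q = Q U_g = Q`, multiplying a double average by `Q` on both sides absorbs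
every `U_g`, so `Q P_da(G,ν) Q = Q P Q`. As `π` is `G`-invariant, each `U_g` is an isometry
of `L²(π)`, hence their average `Q` is a contraction, and `Q` preserves `L²₀(π)`;
therefore `‖Q M Q‖ ≤ ‖M‖` on `L²₀(π)` for every `M`. -/

section PermMat

variable {X G : Type*} [Fintype X] [DecidableEq X] [Group G] [MulAction G X]

lemma permMat_mulVec (g : G) (f : X → ℝ) : permMat g *ᵥ f = fun x => f (g • x) := by
  funext x
  simp [permMat, mulVec, dotProduct]

lemma permMat_mul (g h : G) : permMat (X := X) g * permMat h = permMat (h * g) := by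
  ext x y
  simp only [permMat, Matrix.mul_apply, ite_mul, one_mul, zero_mul, mul_smul]
  rw [Finset.sum_ite_eq' _ (g • x) fun z => if y = h • z then (1 : ℝ) else 0]
  simp

lemma vecMul_permMat {π : X → ℝ} (hπ : ∀ (g : G) (x : X), π (g • x) = π x) (g : G) :
    π ᵥ* permMat g = π := by
  funext y
  simp only [permMat, vecMul, dotProduct, mul_ite, mul_one, mul_zero, eq_comm (a := y),
    smul_eq_iff_eq_inv_smul]
  simp [hπ]

variable [Fintype G]

lemma unifAvg_mul_permMat (g : G) : unifAvg X G * permMat g = unifAvg X G := by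
  rw [unifAvg, Matrix.smul_mul, Finset.sum_mul]
  congr 1
  exact Fintype.sum_equiv (Equiv.mulLeft g) _ _ fun h => permMat_mul h g

lemma permMat_mul_unifAvg (g : G) : permMat g * unifAvg X G = unifAvg X G := by
  rw [unifAvg, Matrix.mul_smul, Finset.mul_sum]
  congr 1
  exact Fintype.sum_equiv (Equiv.mulRight g) _ _ fun h => permMat_mul g h

lemma vecMul_unifAvg {π : X → ℝ} (hπ : ∀ (g : G) (x : X), π (g • x) = π x) :
    π ᵥ* unifAvg X G = π := by
  have hG : (Fintype.card G : ℝ) ≠ 0 := Nat.cast_ne_zero.mpr Fintype.card_ne_zero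
  simp only [unifAvg, vecMul_smul, vecMul_sum, vecMul_permMat hπ, Finset.sum_const,
    Finset.card_univ, ← Nat.cast_smul_eq_nsmul ℝ, inv_smul_smul₀ hG]

lemma unifAvg_mul_doubleAvg_mul_unifAvg (ν : G × G → ℝ) (P : Matrix X X ℝ) :
    unifAvg X G * doubleAvg ν P * unifAvg X G =
      (∑ p, ν p) • (unifAvg X G * P * unifAvg X G) := by
  simp only [doubleAvg, Finset.mul_sum, Finset.sum_mul, Finset.sum_smul, Matrix.mul_smul,
    Matrix.smul_mul, ← Matrix.mul_assoc, unifAvg_mul_permMat]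
  simp only [Matrix.mul_assoc, permMat_mul_unifAvg]

end PermMat

section WeightedNorm

variable {X : Type*} {π : X → ℝ}

noncomputable def weightedEmbedding (π : X → ℝ) : (X → ℝ) →ₗ[ℝ] EuclideanSpace ℝ X :=
  (WithLp.linearEquiv 2 ℝ (X → ℝ)).symm.toLinearMap ∘ₗ
    LinearMap.pi fun x => √(π x) • LinearMap.proj x

lemma weightedEmbedding_apply (f : X → ℝ) (x : X) :
    weightedEmbedding π f x = √(π x) * f x := rfl

lemma weightedEmbedding_injective (hπ : ∀ x, 0 < π x) :
    Function.Injective (weightedEmbedding π) := fun f g hfg => funext fun x => by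
  have := congrArg (· x) hfg
  simpa [weightedEmbedding_apply, (Real.sqrt_pos.mpr (hπ x)).ne'] using this

variable [Fintype X]

lemma pNorm_eq_norm_weightedEmbedding (hπ : ∀ x, 0 ≤ π x) (f : X → ℝ) :
    pNorm π f = ‖weightedEmbedding π f‖ := by
  rw [EuclideanSpace.norm_eq, pNorm]
  congr 1
  refine Finset.sum_congr rfl fun x _ => ?_
  rw [weightedEmbedding_apply, Real.norm_eq_abs, sq_abs, mul_pow, Real.sq_sqrt (hπ x)]

lemma pNorm_smul (c : ℝ) (f : X → ℝ) : pNorm π (c • f) = |c| * pNorm π f := by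
  simp only [pNorm, Pi.smul_apply, smul_eq_mul, mul_pow, mul_left_comm (π _), ← Finset.mul_sum]
  rw [Real.sqrt_mul (sq_nonneg c), Real.sqrt_sq_eq_abs]

lemma pNorm_sum_le (hπ : ∀ x, 0 ≤ π x) {ι : Type*} (s : Finset ι) (v : ι → X → ℝ) :
    pNorm π (∑ i ∈ s, v i) ≤ ∑ i ∈ s, pNorm π (v i) := by
  simpa only [pNorm_eq_norm_weightedEmbedding hπ, map_sum] using norm_sum_le _ _

lemma exists_pNorm_mulVec_le (hπ : ∀ x, 0 < π x) (M : Matrix X X ℝ) :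
    ∃ C, 0 ≤ C ∧ ∀ f, pNorm π (M *ᵥ f) ≤ C * pNorm π f := by
  obtain ⟨K, -, hK⟩ := (weightedEmbedding π).injective_iff_antilipschitz.mp
    (weightedEmbedding_injective hπ)
  let L := (weightedEmbedding π ∘ₗ M.mulVecLin).toContinuousLinearMap
  refine ⟨‖L‖ * K, by positivity, fun f => ?_⟩
  simp only [pNorm_eq_norm_weightedEmbedding fun x => (hπ x).le, mul_assoc]
  calc ‖weightedEmbedding π (M *ᵥ f)‖ = ‖L f‖ := rfl
    _ ≤ ‖L‖ * ‖f‖ := L.le_opNorm f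
    _ ≤ ‖L‖ * (K * ‖weightedEmbedding π f‖) := by
      gcongr
      exact ZeroHomClass.bound_of_antilipschitz _ hK f

lemma bddAbove_range_pNorm_mulVec (hπ : ∀ x, 0 < π x) (M : Matrix X X ℝ) :
    BddAbove (Set.range fun f : {f : X → ℝ // (∑ x, π x * f x = 0) ∧ pNorm π f ≤ 1} =>
      pNorm π (M *ᵥ f.1)) := by
  obtain ⟨C, hC, hM⟩ := exists_pNorm_mulVec_le hπ M
  refine ⟨C, Set.forall_mem_range.mpr fun f => ?_⟩
  calc pNorm π (M *ᵥ f.1) ≤ C * pNorm π f.1 := hM f.1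
    _ ≤ C := mul_le_of_le_one_right hC f.2.2

lemma opNorm20_mul_mul_le (hπ : ∀ x, 0 < π x) {A B : Matrix X X ℝ}
    (hA : ∀ f, pNorm π (A *ᵥ f) ≤ pNorm π f) (hB : ∀ f, pNorm π (B *ᵥ f) ≤ pNorm π f)
    (hB₀ : ∀ f, ∑ x, π x * f x = 0 → ∑ x, π x * (B *ᵥ f) x = 0) (M : Matrix X X ℝ) :
    opNorm20 π (A * M * B) ≤ opNorm20 π M := by
  have : Nonempty {f : X → ℝ // (∑ x, π x * f x = 0) ∧ pNorm π f ≤ 1} :=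
    ⟨⟨0, by simp, by simp [pNorm]⟩⟩
  refine ciSup_le fun f => ?_
  rw [← mulVec_mulVec, ← mulVec_mulVec]
  calc pNorm π (A *ᵥ (M *ᵥ (B *ᵥ f.1))) ≤ pNorm π (M *ᵥ (B *ᵥ f.1)) := hA _
    _ ≤ opNorm20 π M :=
      le_ciSup (bddAbove_range_pNorm_mulVec hπ M) ⟨B *ᵥ f.1, hB₀ f.1 f.2.1, (hB f.1).trans f.2.2⟩

end WeightedNorm

section Averaging

variable {X G : Type*} [Fintype X] [DecidableEq X] [Group G] [MulAction G X] {π : X → ℝ}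

lemma pNorm_permMat_mulVec (hπ : ∀ (g : G) (x : X), π (g • x) = π x) (g : G) (f : X → ℝ) :
    pNorm π (permMat g *ᵥ f) = pNorm π f := by
  simp only [pNorm, permMat_mulVec]
  congr 1
  exact Fintype.sum_equiv (MulAction.toPerm g) _ _ fun x => by rw [MulAction.toPerm_apply, hπ]

variable [Fintype G]

lemma pNorm_unifAvg_mulVec_le (hπ₀ : ∀ x, 0 ≤ π x) (hπ : ∀ (g : G) (x : X), π (g • x) = π x)
    (f : X → ℝ) : pNorm π (unifAvg X G *ᵥ f) ≤ pNorm π f := by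
  have hG : (0 : ℝ) < Fintype.card G := Nat.cast_pos.mpr Fintype.card_pos
  rw [unifAvg, smul_mulVec, sum_mulVec, pNorm_smul, abs_of_pos (inv_pos.mpr hG),
    inv_mul_le_iff₀ hG]
  calc pNorm π (∑ g : G, permMat g *ᵥ f) ≤ ∑ g : G, pNorm π (permMat g *ᵥ f) :=
        pNorm_sum_le hπ₀ _ _
    _ = Fintype.card G * pNorm π f := by simp [pNorm_permMat_mulVec hπ]

lemma sum_mul_unifAvg_mulVec (hπ : ∀ (g : G) (x : X), π (g • x) = π x) (f : X → ℝ) :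
    ∑ x, π x * (unifAvg X G *ᵥ f) x = ∑ x, π x * f x := by
  change π ⬝ᵥ (unifAvg X G *ᵥ f) = π ⬝ᵥ f
  rw [dotProduct_mulVec, vecMul_unifAvg hπ]

end Averaging

theorem stmt9_general {X G : Type*} [Fintype X] [DecidableEq X] [Fintype G] [Group G] [MulAction G X]
    (π : X → ℝ) (hπpos : ∀ x, 0 < π x)
    (hπinv : ∀ (g : G) (x : X), π (g • x) = π x)
    (P : Matrix X X ℝ)
    (ν : G × G → ℝ) (hνsum : ∑ p : G × G, ν p = 1) :
    1 - opNorm20 π (doubleAvg ν P) ≤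
      1 - opNorm20 π (unifAvg X G * P * unifAvg X G) := by
  have hQ : ∀ f, pNorm π (unifAvg X G *ᵥ f) ≤ pNorm π f :=
    pNorm_unifAvg_mulVec_le (fun x => (hπpos x).le) hπinv
  have hQPQ : unifAvg X G * P * unifAvg X G = unifAvg X G * doubleAvg ν P * unifAvg X G := by
    rw [unifAvg_mul_doubleAvg_mul_unifAvg, hνsum, one_smul]
  rw [hQPQ]
  exact sub_le_sub_left (opNorm20_mul_mul_le hπpos hQ hQ
    (fun f hf => (sum_mul_unifAvg_mulVec hπinv f).trans hf) _) 1

/-- the independent double average `QPQ` has multiplicative spectral gap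
`γ(K) = 1 - ‖K‖_{L²₀(π)→L²₀(π)}` at least as large as any general double-average
`P_da(G,ν)`. -/
theorem stmt9 {X G : Type*} [Fintype X] [DecidableEq X] [Fintype G] [Group G] [MulAction G X]
    (π : X → ℝ) (hπpos : ∀ x, 0 < π x) (hπsum : ∑ x, π x = 1)
    (hπinv : ∀ (g : G) (x : X), π (g • x) = π x)
    (P : Matrix X X ℝ) (hPnn : ∀ x y, 0 ≤ P x y) (hProw : ∀ x, ∑ y, P x y = 1)
    (hPstat : ∀ y, ∑ x, π x * P x y = π y)
    (ν : G × G → ℝ) (hνnn : ∀ p, 0 ≤ ν p) (hνsum : ∑ p : G × G, ν p = 1) :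
    1 - opNorm20 π (doubleAvg ν P) ≤
      1 - opNorm20 π (unifAvg X G * P * unifAvg X G) :=
  stmt9_general π hπpos hπinv P ν hνsum
end

section
/- Let π be a G-invariant full-support probability on finite X, P, M stochastic matrices with M G-invariant under ν (M = Σ ν(g,h) U_g M U_h) and P_da := Σ ν(g,h) U_g P U_h also ν-invariant. Assume all transition probabilities of M are positive. Then the π-weighted KL divergence satisfies the Pythagorean identity D^π_KL(P‖M) = D^π_KL(P‖P_da) + D^π_KL(P_da‖M), provided the group action preserves counting measure (permutations). -/
/-!
Write `Q = P_da`. A fixed point `A` of the `ν`-double-averaging is a convex combination of the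
rearrangements `A (g • x) (h⁻¹ • y)`, all of the same Euclidean norm as `A`, so the `ν`-weighted
variance of these rearrangements around `A` vanishes and `A` is invariant under every `(g, h)` in
the support of `ν`. Hence `log (Q / M)`
is invariant, and since `π` is invariant too, pairing it against `Q` is the same as pairing it
against `P`: `D(Q‖M) = ∑ π P log (Q / M)`. The identity then follows termwise from
`log (P / M) = log (P / Q) + log (Q / M)`, which is legitimate because `Q x y = 0` forces
`P x y = 0`.
-/

open Matrix

/-- `π`-weighted Kullback–Leibler divergence of `A` from `B`
(with the convention `0 · log(0/a) = 0`, which holds since `Real.log 0 = 0`). -/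
noncomputable def klDiv {X : Type*} [Fintype X] (π : X → ℝ) (A B : Matrix X X ℝ) : ℝ :=
  ∑ x, ∑ y, π x * A x y * Real.log (A x y / B x y)

open Finset

theorem apply_perm_eq_of_eq_sum_mul_apply_perm {ι κ : Type*} [Fintype ι] [Fintype κ]
    {w : κ → ℝ} (hw0 : ∀ k, 0 ≤ w k) (hw1 : ∑ k, w k = 1) (σ : κ → Equiv.Perm ι)
    {a : ι → ℝ} (ha : ∀ i, ∑ k, w k * a (σ k i) = a i) {k : κ} (hk : w k ≠ 0) (i : ι) :
    a (σ k i) = a i := by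
  have hnorm (k : κ) : ∑ i, a (σ k i) ^ 2 = ∑ i, a i ^ 2 := Equiv.sum_comp (σ k) (a · ^ 2)
  have hvar : ∑ k, w k * ∑ i, (a (σ k i) - a i) ^ 2 = 0 := by
    calc ∑ k, w k * ∑ i, (a (σ k i) - a i) ^ 2
        = ∑ i, ∑ k, (w k * a (σ k i) ^ 2 - 2 * a i * (w k * a (σ k i)) + a i ^ 2 * w k) := by
          simp only [mul_sum]
          rw [sum_comm]
          exact sum_congr rfl fun _ _ => sum_congr rfl fun _ _ => by ring
      _ = ∑ i, (∑ k, w k * a (σ k i) ^ 2 - 2 * a i * a i + a i ^ 2 * 1) := by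
          simp only [sum_add_distrib, sum_sub_distrib, ← mul_sum, ha, hw1]
      _ = ∑ k, w k * ∑ i, a (σ k i) ^ 2 - ∑ i, a i ^ 2 := by
          simp only [mul_sum]
          rw [sum_comm (γ := κ), ← sum_sub_distrib]
          exact sum_congr rfl fun _ _ => by ring
      _ = 0 := by simp only [hnorm, ← sum_mul, hw1]; ring
  have hterm := (sum_eq_zero_iff_of_nonneg fun k _ =>
    mul_nonneg (hw0 k) (sum_nonneg fun _ _ => sq_nonneg _)).mp hvar k (mem_univ k)
  have hsq := (sum_eq_zero_iff_of_nonneg fun i _ => by positivity).mp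
    ((mul_eq_zero.mp hterm).resolve_left hk) i (mem_univ i)
  exact sub_eq_zero.mp (pow_eq_zero_iff two_ne_zero |>.mp hsq)

section

variable {X G : Type*} [Fintype X] [Group G] [MulAction G X]

theorem sum_sum_smul_smul (g h : G) (f : X → X → ℝ) :
    ∑ x, ∑ y, f (g • x) (h • y) = ∑ x, ∑ y, f x y :=
  Fintype.sum_equiv (MulAction.toPerm g) _ _ fun _ =>
    Fintype.sum_equiv (MulAction.toPerm h) _ _ fun _ => rfl

variable [DecidableEq X]

theorem permMat_mul_apply (g : G) (A : Matrix X X ℝ) (x y : X) :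
    (permMat g * A : Matrix X X ℝ) x y = A (g • x) y := by
  simp [mul_apply, permMat]

theorem mul_permMat_apply (h : G) (A : Matrix X X ℝ) (x y : X) :
    (A * permMat h : Matrix X X ℝ) x y = A x (h⁻¹ • y) := by
  simp [mul_apply, permMat, eq_comm (a := y), smul_eq_iff_eq_inv_smul]

theorem doubleAvg_apply [Fintype G] (ν : G × G → ℝ) (A : Matrix X X ℝ) (x y : X) :
    doubleAvg ν A x y = ∑ p : G × G, ν p * A (p.1 • x) (p.2⁻¹ • y) := by
  simp [doubleAvg, Matrix.sum_apply, mul_permMat_apply, permMat_mul_apply]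

variable [Fintype G] {ν : G × G → ℝ}

theorem apply_smul_eq_of_doubleAvg_eq (hν0 : ∀ p, 0 ≤ ν p) (hν1 : ∑ p, ν p = 1)
    {A : Matrix X X ℝ} (hA : doubleAvg ν A = A) {p : G × G} (hp : ν p ≠ 0) (x y : X) :
    A (p.1 • x) (p.2⁻¹ • y) = A x y :=
  apply_perm_eq_of_eq_sum_mul_apply_perm hν0 hν1
    (fun p => (MulAction.toPerm p.1).prodCongr (MulAction.toPerm p.2⁻¹)) (a := Function.uncurry A)
    (fun q => (doubleAvg_apply ν A q.1 q.2).symm.trans (congrFun (congrFun hA q.1) q.2)) hp (x, y)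

theorem apply_eq_zero_of_doubleAvg_apply_eq_zero (hν0 : ∀ p, 0 ≤ ν p) (hν1 : ∑ p, ν p = 1)
    {P : Matrix X X ℝ} (hP : ∀ x y, 0 ≤ P x y)
    (hPinv : doubleAvg ν (doubleAvg ν P) = doubleAvg ν P) {x y : X}
    (h : doubleAvg ν P x y = 0) : P x y = 0 := by
  obtain ⟨p, -, hp⟩ : ∃ p ∈ univ, (0 : ℝ) < ν p := exists_lt_of_sum_lt (by simp [hν1])
  have h' : doubleAvg ν P (p.1⁻¹ • x) (p.2 • y) = 0 := by
    rw [← h, ← apply_smul_eq_of_doubleAvg_eq hν0 hν1 hPinv hp.ne']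
    simp
  rw [doubleAvg_apply] at h'
  have hle := single_le_sum (f := fun q => ν q * P (q.1 • p.1⁻¹ • x) (q.2⁻¹ • p.2 • y))
    (fun q _ => mul_nonneg (hν0 q) (hP _ _)) (mem_univ p)
  simp only [smul_inv_smul, inv_smul_smul, h'] at hle
  exact le_antisymm (nonpos_of_mul_nonpos_right hle hp) (hP x y)

theorem sum_sum_mul_doubleAvg_mul (hν1 : ∑ p, ν p = 1) {π : X → ℝ}
    (hπ : ∀ (g : G) x, π (g • x) = π x) (P : Matrix X X ℝ) {f : X → X → ℝ}
    (hf : ∀ p, ν p ≠ 0 → ∀ x y, f (p.1 • x) (p.2⁻¹ • y) = f x y) :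
    ∑ x, ∑ y, π x * doubleAvg ν P x y * f x y = ∑ x, ∑ y, π x * P x y * f x y := by
  calc ∑ x, ∑ y, π x * doubleAvg ν P x y * f x y
      = ∑ p, ν p * ∑ x, ∑ y, π x * P (p.1 • x) (p.2⁻¹ • y) * f x y := by
        simp only [doubleAvg_apply, mul_sum, sum_mul]
        refine (sum_congr rfl fun _ _ => sum_comm).trans (sum_comm.trans ?_)
        exact sum_congr rfl fun _ _ => sum_congr rfl fun _ _ => sum_congr rfl fun _ _ => by ring
    _ = ∑ p, ν p * ∑ x, ∑ y, π x * P x y * f x y := by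
        refine sum_congr rfl fun p _ => ?_
        rcases eq_or_ne (ν p) 0 with hp | hp
        · simp [hp]
        congr 1
        calc ∑ x, ∑ y, π x * P (p.1 • x) (p.2⁻¹ • y) * f x y
            = ∑ x, ∑ y, π (p.1 • x) * P (p.1 • x) (p.2⁻¹ • y) * f (p.1 • x) (p.2⁻¹ • y) := by
              simp only [hπ, hf p hp]
          _ = ∑ x, ∑ y, π x * P x y * f x y :=
              sum_sum_smul_smul p.1 p.2⁻¹ fun x y => π x * P x y * f x y
    _ = ∑ x, ∑ y, π x * P x y * f x y := by rw [← sum_mul, hν1, one_mul]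

end

theorem stmt12_general {X G : Type*} [Fintype X] [DecidableEq X] [Fintype G] [Group G] [MulAction G X]
    (π : X → ℝ)
    (hπinv : ∀ (g : G) (x : X), π (g • x) = π x)
    (P : Matrix X X ℝ) (hPnn : ∀ x y, 0 ≤ P x y)
    (M : Matrix X X ℝ) (hMpos : ∀ x y, 0 < M x y)
    (ν : G × G → ℝ) (hνnn : ∀ p, 0 ≤ ν p) (hνsum : ∑ p : G × G, ν p = 1)
    (hMinv : doubleAvg ν M = M)
    (hPdainv : doubleAvg ν (doubleAvg ν P) = doubleAvg ν P) :
    klDiv π P M = klDiv π P (doubleAvg ν P) + klDiv π (doubleAvg ν P) M := by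
  set Q := doubleAvg ν P
  have hQM : klDiv π Q M = ∑ x, ∑ y, π x * P x y * Real.log (Q x y / M x y) :=
    sum_sum_mul_doubleAvg_mul hνsum hπinv P fun p hp x y => by
      rw [apply_smul_eq_of_doubleAvg_eq hνnn hνsum hPdainv hp,
        apply_smul_eq_of_doubleAvg_eq hνnn hνsum hMinv hp]
  rw [hQM, klDiv, klDiv, ← sum_add_distrib]
  refine sum_congr rfl fun x _ => ?_
  rw [← sum_add_distrib]
  refine sum_congr rfl fun y _ => ?_
  by_cases hP : P x y = 0
  · simp [hP]
  have hQ : Q x y ≠ 0 := mt (apply_eq_zero_of_doubleAvg_apply_eq_zero hνnn hνsum hPnn hPdainv) hP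
  rw [← mul_add, ← Real.log_mul (div_ne_zero hP hQ) (div_ne_zero hQ (hMpos x y).ne'),
    div_mul_div_cancel₀ hQ]

/-- Pythagorean identity for the `π`-weighted KL divergence: if `M` has
positive entries and both `M` and `P_da` are fixed by the `ν`-double-averaging, then
`D^π_KL(P‖M) = D^π_KL(P‖P_da) + D^π_KL(P_da‖M)`. -/
theorem stmt12 {X G : Type*} [Fintype X] [DecidableEq X] [Fintype G] [Group G] [MulAction G X]
    (π : X → ℝ) (hπpos : ∀ x, 0 < π x) (hπsum : ∑ x, π x = 1)
    (hπinv : ∀ (g : G) (x : X), π (g • x) = π x)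
    (P : Matrix X X ℝ) (hPnn : ∀ x y, 0 ≤ P x y) (hProw : ∀ x, ∑ y, P x y = 1)
    (M : Matrix X X ℝ) (hMpos : ∀ x y, 0 < M x y) (hMrow : ∀ x, ∑ y, M x y = 1)
    (ν : G × G → ℝ) (hνnn : ∀ p, 0 ≤ ν p) (hνsum : ∑ p : G × G, ν p = 1)
    (hMinv : doubleAvg ν M = M)
    (hPdainv : doubleAvg ν (doubleAvg ν P) = doubleAvg ν P) :
    klDiv π P M = klDiv π P (doubleAvg ν P) + klDiv π (doubleAvg ν P) M :=
  stmt12_general π hπinv P hPnn M hMpos ν hνnn hνsum hMinv hPdainv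
end
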